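/- arXiv:1107.0817 — 2 statements merged into one kernel-verified Lean document; each statement's English description precedes it below -/
import Mathlib

section
/- Let f be an orientation-preserving homeomorphism of ℝ² and I an isotopy from the identity to f. Given z' ∈ Fix(f), there exists a neighborhood W of infinity in ℝ² such that for every z ∈ W ∩ Fix(f), the rotation number ρ_{I,z'}(z) equals Tourne_I(z), i.e. Enlace_I(z, z') = Tourne_I(z). -/
open MeasureTheory Filter Topology Set Metric

noncomputable section

attribute [local instance] Classical.propDecidable

/-- An isotopy (within homeomorphisms of `X`) from the identity to `f`,
parametrised by `t ∈ [0,1]` (the values for `t ∉ [0,1]` are irrelevant). -/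
structure HIsotopy {X : Type*} [TopologicalSpace X] (f : X ≃ₜ X) where
  F : ℝ → X ≃ₜ X
  cont : Continuous fun p : ℝ × X => F p.1 p.2
  cont_symm : Continuous fun p : ℝ × X => (F p.1).symm p.2
  zero : F 0 = Homeomorph.refl X
  one : F 1 = f

/-- The set of fixed points of a map. -/
def FixPts {X : Type*} (g : X → X) : Set X := {z | g z = z}

/-- The set of positively recurrent points of `f`. -/
def RecPlus (f : ℂ ≃ₜ ℂ) : Set ℂ :=
  {z | ∃ n : ℕ → ℕ, StrictMono n ∧ Tendsto (fun k => (⇑f)^[n k] z) atTop (𝓝 z)}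

/-- The total angular variation (number of turns around the origin, i.e. the
integral of the polar-angle form `dθ`) of a continuous path `[0,1] → ℂ ∖ {0}`,
defined via a continuous lift of the argument (junk value otherwise). -/
def angVar (γ : ℝ → ℂ) : ℝ :=
  if h : ∃ θ : ℝ → ℝ, ContinuousOn θ (Set.Icc 0 1) ∧
      ∀ t ∈ Set.Icc (0 : ℝ) 1, γ t = (‖γ t‖ : ℂ) * Complex.exp ((θ t : ℂ) * Complex.I)
  then (h.choose 1 - h.choose 0) / (2 * Real.pi)
  else 0

/-- `Enlace_I(z,z')`: the integral of `dθ` along `t ↦ f_t(z) - f_t(z')`. -/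
def Enlace {f : ℂ ≃ₜ ℂ} (I : HIsotopy f) (z z' : ℂ) : ℝ :=
  angVar fun t => I.F t z - I.F t z'

/-- `Tourne_I(z)`: the integral of `dθ` along `t ↦ f_t(z)`. -/
def Tourne {f : ℂ ≃ₜ ℂ} (I : HIsotopy f) (z : ℂ) : ℝ :=
  angVar fun t => I.F t z

/-- Property (P1): `Enlace_I` is bounded on pairs of distinct fixed points. -/
def P1 {f : ℂ ≃ₜ ℂ} (I : HIsotopy f) : Prop :=
  ∃ M : ℝ, ∀ z ∈ FixPts ⇑f, ∀ z' ∈ FixPts ⇑f, z ≠ z' → |Enlace I z z'| ≤ M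

/-- Property (P2): `Tourne_I` is constant on the fixed points in a
neighbourhood of infinity (i.e. outside some compact set). -/
def P2 {f : ℂ ≃ₜ ℂ} (I : HIsotopy f) : Prop :=
  ∃ K : Set ℂ, IsCompact K ∧
    ∀ z ∈ FixPts ⇑f \ K, ∀ z' ∈ FixPts ⇑f \ K, Tourne I z = Tourne I z'

/-- An isotopy is adapted if `Tourne_I` vanishes on the fixed points in a
neighbourhood of infinity. -/
def Adapted {f : ℂ ≃ₜ ℂ} (I : HIsotopy f) : Prop :=
  ∃ K : Set ℂ, IsCompact K ∧ ∀ z ∈ FixPts ⇑f \ K, Tourne I z = 0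

/-- The orbit of `z` has rotation number `ρ` around `z'` (with respect to the
isotopy `I`): along every strictly increasing sequence of integers `(n k)` with
`f^[n k] z → z`, the Birkhoff averages of `Enlace I · z'` converge to `ρ`. -/
def HasRot {f : ℂ ≃ₜ ℂ} (I : HIsotopy f) (z' z : ℂ) (ρ : ℝ) : Prop :=
  ∀ n : ℕ → ℕ, StrictMono n → Tendsto (fun k => (⇑f)^[n k] z) atTop (𝓝 z) →
    Tendsto (fun k => (∑ r ∈ Finset.range (n k), Enlace I ((⇑f)^[r] z) z') / (n k : ℝ))
      atTop (𝓝 ρ)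

/-- The rotation number `ρ_{z'}(z)` as a function (junk value `0` if it is
not defined). -/
def rho {f : ℂ ≃ₜ ℂ} (I : HIsotopy f) (z' z : ℂ) : ℝ :=
  if h : ∃ ρ : ℝ, HasRot I z' z ρ then h.choose else 0

/-- A free disc for `f`: an open set homeomorphic to the plane and disjoint
from its image. -/
def FreeDisc (f : ℂ ≃ₜ ℂ) (U : Set ℂ) : Prop :=
  IsOpen U ∧ Nonempty (U ≃ₜ ℂ) ∧ Disjoint (⇑f '' U) U

/-- The first return time `τ_U(z)` to `U` (junk value `0` if the orbit never
returns). -/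
def retTime (f : ℂ ≃ₜ ℂ) (U : Set ℂ) (z : ℂ) : ℕ :=
  sInf {n : ℕ | 0 < n ∧ (⇑f)^[n] z ∈ U}

/-- `γ` is a path in `U` from `x` to `y` (parametrised by `[0,1]`). -/
def IsPathIn (U : Set ℂ) (x y : ℂ) (γ : ℝ → ℂ) : Prop :=
  ContinuousOn γ (Set.Icc 0 1) ∧ (∀ t ∈ Set.Icc (0 : ℝ) 1, γ t ∈ U) ∧ γ 0 = x ∧ γ 1 = y

/-- `α_{U,z'}(z) = Σ_{0 ≤ ℓ < τ_U(z)} Enlace_I(f^ℓ(z),z') + ∫_{γ_{U,z} - z'} dθ`,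
where `γ_{U,z}` is a path in `U` joining the first return `F_U(z)` to `z`. -/
def alphaU {f : ℂ ≃ₜ ℂ} (I : HIsotopy f) (U : Set ℂ) (z' z : ℂ) : ℝ :=
  (∑ ℓ ∈ Finset.range (retTime f U z), Enlace I ((⇑f)^[ℓ] z) z') +
    if h : ∃ γ : ℝ → ℂ, IsPathIn U ((⇑f)^[retTime f U z] z) z γ
    then angVar fun t => h.choose t - z' else 0

/-- `α̂_{U,R}(z) = sup { |α_{U,z'}(z)| : z' ∈ Fix(f), ‖z'‖ ≥ R }`. -/
def alphaHat {f : ℂ ≃ₜ ℂ} (I : HIsotopy f) (U : Set ℂ) (R : ℝ) (z : ℂ) : ℝ :=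
  sSup {a : ℝ | ∃ z' ∈ FixPts ⇑f, R ≤ ‖z'‖ ∧ a = |alphaU I U z' z|}

/-- The (closed) support of a measure. -/
def measSupport {X : Type*} [TopologicalSpace X] {m : MeasurableSpace X}
    (μ : Measure X) : Set X :=
  {x | ∀ U : Set X, IsOpen U → x ∈ U → μ U ≠ 0}

/-- The standard unit sphere `S² ⊂ ℝ³`. -/
notation "𝕊²" => Metric.sphere (0 : EuclideanSpace ℝ (Fin 3)) 1

instance : Fact (Module.finrank ℝ (EuclideanSpace ℝ (Fin 3)) = 3) :=
  ⟨finrank_euclideanSpace_fin⟩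

open Manifold in
/-- `g` is a `C¹` diffeomorphism of the standard sphere. -/
def IsC1SphereDiffeo (g : 𝕊² → 𝕊²) : Prop :=
  Function.Bijective g ∧ ContMDiff (𝓡 2) (𝓡 2) 1 g ∧
    ∃ g' : 𝕊² → 𝕊², Function.LeftInverse g' g ∧ Function.RightInverse g' g ∧
      ContMDiff (𝓡 2) (𝓡 2) 1 g'

/-- `f` extends to a `C¹` diffeomorphism of `S² = ℝ² ⊔ {∞}` for some smooth
structure on `S²`: transporting the extension of `f` to the one-point
compactification through some homeomorphism with the standard sphere yields a
`C¹` diffeomorphism. -/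
def ExtendsToC1SphereDiffeo (f : ℂ ≃ₜ ℂ) : Prop :=
  ∃ φ : OnePoint ℂ ≃ₜ 𝕊², IsC1SphereDiffeo fun x => φ (OnePoint.map (⇑f) (φ.symm x))

/-- The commutator loop `t ↦ [f₁^t, f₂^t] = f₁^t ∘ f₂^t ∘ (f₁^t)⁻¹ ∘ (f₂^t)⁻¹`. -/
def commLoop {X : Type*} [TopologicalSpace X] {f₁ f₂ : X ≃ₜ X}
    (I₁ : HIsotopy f₁) (I₂ : HIsotopy f₂) (t : ℝ) : X ≃ₜ X :=
  (I₂.F t).symm.trans ((I₁.F t).symm.trans ((I₂.F t).trans (I₁.F t)))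

/-- The invariant `W(f₁,f₂)` vanishes: for isotopies from the identity to
`f₁`, `f₂`, the commutator loop is null-homotopic (rel basepoint) in the group
of homeomorphisms. -/
def WVanishes {X : Type*} [TopologicalSpace X] (f₁ f₂ : X ≃ₜ X) : Prop :=
  ∃ (I₁ : HIsotopy f₁) (I₂ : HIsotopy f₂) (H : ℝ → ℝ → X ≃ₜ X),
    Continuous (fun p : (ℝ × ℝ) × X => H p.1.1 p.1.2 p.2) ∧
    Continuous (fun p : (ℝ × ℝ) × X => (H p.1.1 p.1.2).symm p.2) ∧
    (∀ t, H 0 t = commLoop I₁ I₂ t) ∧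
    (∀ t, H 1 t = Homeomorph.refl X) ∧
    (∀ s, H s 0 = Homeomorph.refl X) ∧
    (∀ s, H s 1 = Homeomorph.refl X)

/-- The shorter great-circle arc joining `p` to `z` on the unit sphere
(for `z` neither `p` nor its antipode): the points of the sphere which are
nonnegative linear combinations of `p` and `z`. -/
def minorArcS (p z : 𝕊²) : Set 𝕊² :=
  {x | ∃ a b : ℝ, 0 ≤ a ∧ 0 ≤ b ∧
    (x : EuclideanSpace ℝ (Fin 3)) =
      a • (p : EuclideanSpace ℝ (Fin 3)) + b • (z : EuclideanSpace ℝ (Fin 3))}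

/-- The longer great-circle arc joining `p` to `z` on the unit sphere. -/
def majorArcS (p z : 𝕊²) : Set 𝕊² :=
  {x | ∃ a b : ℝ, (a ≤ 0 ∨ b ≤ 0) ∧
    (x : EuclideanSpace ℝ (Fin 3)) =
      a • (p : EuclideanSpace ℝ (Fin 3)) + b • (z : EuclideanSpace ℝ (Fin 3))}

/-! The trajectory `t ↦ f_t(z')` is bounded, say by `C`. Outside the compact set of points whose
trajectory meets the disc of radius `C`, we have `f_t(z) - f_t(z') = f_t(z) (1 - f_t(z')/f_t(z))`
with the second factor in the right half-plane, so its principal argument is continuous; when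
`z` and `z'` are fixed it takes the same value at `t = 0` and `t = 1`, hence both paths make the
same number of turns around `0`. -/

open Complex in
lemma Complex.inv_mem_slitPlane {z : ℂ} (hz : z ∈ slitPlane) : z⁻¹ ∈ slitPlane := by
  have hpos : 0 < normSq z := normSq_pos.2 (slitPlane_ne_zero hz)
  rw [mem_slitPlane_iff] at hz ⊢
  rw [inv_re, inv_im]
  refine hz.imp (fun h => div_pos h hpos) fun h => ?_
  exact div_ne_zero (neg_ne_zero.2 h) hpos.ne'

def IsArgLift (γ : ℝ → ℂ) (θ : ℝ → ℝ) : Prop :=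
  ContinuousOn θ (Icc 0 1) ∧
    ∀ t ∈ Icc (0 : ℝ) 1, γ t = (‖γ t‖ : ℂ) * Complex.exp ((θ t : ℂ) * Complex.I)

namespace IsArgLift

variable {γ γ' q : ℝ → ℂ} {θ θ' : ℝ → ℝ}

lemma sub_mem_zmultiples (hθ : IsArgLift γ θ) (hθ' : IsArgLift γ θ') {t : ℝ}
    (ht : t ∈ Icc 0 1) (hγ : γ t ≠ 0) :
    θ t - θ' t ∈ AddSubgroup.zmultiples (2 * Real.pi) := by
  have hexp : Circle.exp (θ t) = Circle.exp (θ' t) := by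
    ext1
    rw [Circle.coe_exp, Circle.coe_exp]
    exact mul_left_cancel₀ (by simpa using hγ) ((hθ.2 t ht).symm.trans (hθ'.2 t ht))
  obtain ⟨m, hm⟩ := Circle.exp_eq_exp.1 hexp
  exact ⟨m, show m • (2 * Real.pi) = _ by rw [zsmul_eq_mul, hm]; ring⟩

/-- Two lifts differ by a continuous function with values in the discrete group `2πℤ`, hence by
a constant. -/
lemma sub_eq_sub (hγ : ∀ t ∈ Icc (0 : ℝ) 1, γ t ≠ 0) (hθ : IsArgLift γ θ)
    (hθ' : IsArgLift γ θ') : θ 1 - θ 0 = θ' 1 - θ' 0 := by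
  have hconst := isPreconnected_Icc.constant_of_mapsTo
    (isDiscrete_iff_discreteTopology.2
      (inferInstance : DiscreteTopology (AddSubgroup.zmultiples (2 * Real.pi))))
    (hθ.1.sub hθ'.1)
    (fun t ht => hθ.sub_mem_zmultiples hθ' ht (hγ t ht))
    (left_mem_Icc.2 zero_le_one) (right_mem_Icc.2 zero_le_one)
  simp only [Pi.sub_apply] at hconst
  linarith

lemma mul_of_mem_slitPlane (hθ : IsArgLift γ θ) (hq : ContinuousOn q (Icc 0 1))
    (hq_mem : ∀ t ∈ Icc (0 : ℝ) 1, q t ∈ Complex.slitPlane)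
    (hγ' : ∀ t ∈ Icc (0 : ℝ) 1, γ' t = γ t * q t) :
    IsArgLift γ' fun t => θ t + (q t).arg := by
  refine ⟨hθ.1.add fun t ht => ?_, fun t ht => ?_⟩
  · exact (Complex.continuousAt_arg (hq_mem t ht)).comp_continuousWithinAt (hq t ht)
  · calc γ' t = ((‖γ t‖ : ℂ) * Complex.exp ((θ t : ℂ) * Complex.I)) *
          ((‖q t‖ : ℂ) * Complex.exp (((q t).arg : ℂ) * Complex.I)) := by
          rw [← hθ.2 t ht, Complex.norm_mul_exp_arg_mul_I, hγ' t ht]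
      _ = _ := by
          rw [hγ' t ht, norm_mul, Complex.ofReal_mul, Complex.ofReal_add, add_mul,
            Complex.exp_add]
          ring

end IsArgLift

lemma angVar_eq_of_isArgLift {γ : ℝ → ℂ} {θ : ℝ → ℝ} (hγ : ∀ t ∈ Icc (0 : ℝ) 1, γ t ≠ 0)
    (hθ : IsArgLift γ θ) : angVar γ = (θ 1 - θ 0) / (2 * Real.pi) := by
  have h : ∃ θ, IsArgLift γ θ := ⟨θ, hθ⟩
  rw [angVar]
  exact (dif_pos h).trans (congrArg (· / (2 * Real.pi)) (h.choose_spec.sub_eq_sub hγ hθ))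

lemma angVar_eq_zero_of_not_exists_isArgLift {γ : ℝ → ℂ} (h : ¬∃ θ, IsArgLift γ θ) :
    angVar γ = 0 :=
  dif_neg h

lemma angVar_eq_of_eq_mul_of_mem_slitPlane {γ γ' q : ℝ → ℂ}
    (hγ : ∀ t ∈ Icc (0 : ℝ) 1, γ t ≠ 0) (hq : ContinuousOn q (Icc 0 1))
    (hq_mem : ∀ t ∈ Icc (0 : ℝ) 1, q t ∈ Complex.slitPlane) (hq_loop : q 0 = q 1)
    (hγ' : ∀ t ∈ Icc (0 : ℝ) 1, γ' t = γ t * q t) : angVar γ' = angVar γ := by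
  have hq0 : ∀ t ∈ Icc (0 : ℝ) 1, q t ≠ 0 := fun t ht => Complex.slitPlane_ne_zero (hq_mem t ht)
  by_cases h : ∃ θ, IsArgLift γ θ
  · obtain ⟨θ, hθ⟩ := h
    have hγ'0 : ∀ t ∈ Icc (0 : ℝ) 1, γ' t ≠ 0 := fun t ht => by
      rw [hγ' t ht]
      exact mul_ne_zero (hγ t ht) (hq0 t ht)
    rw [angVar_eq_of_isArgLift hγ'0 (hθ.mul_of_mem_slitPlane hq hq_mem hγ'),
      angVar_eq_of_isArgLift hγ hθ, hq_loop]
    ring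
  · rw [angVar_eq_zero_of_not_exists_isArgLift h, angVar_eq_zero_of_not_exists_isArgLift]
    rintro ⟨θ', hθ'⟩
    refine h ⟨_, hθ'.mul_of_mem_slitPlane (hq.inv₀ hq0)
      (fun t ht => Complex.inv_mem_slitPlane (hq_mem t ht)) fun t ht => ?_⟩
    rw [hγ' t ht, Pi.inv_apply, mul_inv_cancel_right₀ (hq0 t ht)]

namespace HIsotopy

variable {X : Type*} [TopologicalSpace X] {f : X ≃ₜ X}

lemma continuous_trajectory (I : HIsotopy f) (z : X) : Continuous fun t => I.F t z :=
  I.cont.comp (continuous_id.prodMk continuous_const)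

lemma isCompact_setOf_exists_apply_mem (I : HIsotopy f) {K : Set X} (hK : IsCompact K) :
    IsCompact {z | ∃ t ∈ Icc (0 : ℝ) 1, I.F t z ∈ K} := by
  convert (isCompact_Icc.prod hK).image I.cont_symm using 1
  ext z
  constructor
  · rintro ⟨t, ht, hz⟩
    exact ⟨(t, I.F t z), ⟨ht, hz⟩, (I.F t).symm_apply_apply z⟩
  · rintro ⟨⟨t, w⟩, ⟨ht, hw⟩, rfl⟩
    exact ⟨t, ht, by simpa using hw⟩

lemma apply_zero_eq_apply_one (I : HIsotopy f) {z : X} (hz : z ∈ FixPts f) :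
    I.F 0 z = I.F 1 z := by
  rw [I.zero, I.one]
  exact hz.symm

end HIsotopy

lemma enlace_eq_tourne_of_norm_lt {f : ℂ ≃ₜ ℂ} (I : HIsotopy f) {z z' : ℂ}
    (hz : z ∈ FixPts f) (hz' : z' ∈ FixPts f)
    (hnorm : ∀ t ∈ Icc (0 : ℝ) 1, ‖I.F t z'‖ < ‖I.F t z‖) :
    Enlace I z z' = Tourne I z := by
  have hne : ∀ t ∈ Icc (0 : ℝ) 1, I.F t z ≠ 0 := fun t ht =>
    norm_pos_iff.1 ((norm_nonneg _).trans_lt (hnorm t ht))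
  refine angVar_eq_of_eq_mul_of_mem_slitPlane (q := fun t => 1 - I.F t z' / I.F t z) hne
    (continuousOn_const.sub ((I.continuous_trajectory z').continuousOn.div
      (I.continuous_trajectory z).continuousOn hne)) (fun t ht => ?_)
    (by simp only [I.apply_zero_eq_apply_one hz, I.apply_zero_eq_apply_one hz'])
    fun t ht => by field_simp [hne t ht]
  refine Complex.ball_one_subset_slitPlane ?_
  rw [mem_ball, dist_eq_norm, sub_sub_cancel_left, norm_neg, norm_div,
    div_lt_one (norm_pos_iff.2 (hne t ht))]
  exact hnorm t ht

theorem stmt12_enlace_eq_tourne_near_infinity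
    (f : ℂ ≃ₜ ℂ) (I : HIsotopy f)
    (z' : ℂ) (hz' : z' ∈ FixPts ⇑f) :
    ∃ K : Set ℂ, IsCompact K ∧
      ∀ z ∈ FixPts ⇑f \ K, z ≠ z' → Enlace I z z' = Tourne I z := by
  obtain ⟨C, hC⟩ := isCompact_Icc.exists_bound_of_continuousOn
    (I.continuous_trajectory z').continuousOn
  refine ⟨{z | ∃ t ∈ Icc (0 : ℝ) 1, I.F t z ∈ closedBall 0 C},
    I.isCompact_setOf_exists_apply_mem (isCompact_closedBall 0 C), ?_⟩
  rintro z ⟨hz, hzK⟩ -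
  refine enlace_eq_tourne_of_norm_lt I hz hz' fun t ht => (hC t ht).trans_lt ?_
  by_contra! hle
  exact hzK ⟨t, ht, mem_closedBall_zero_iff.2 hle⟩
end
end

section
/- Let S² be the unit sphere of ℝ³ and let g be a C¹ diffeomorphism of S² fixing a point denoted ∞. For every point z ∈ S² distinct from ∞ and from the antipode of ∞, let γ_z be the unique great circle of S² passing through ∞ and z, and let γ⁻_z (respectively γ⁺_z) be the shorter (respectively longer) arc of γ_z joining ∞ to z. Then there exists a punctured neighborhood W of ∞ in S² such that for every fixed point z of g lying in W, one has g(γ⁻_z) ∩ γ⁺_z = {z, ∞}. -/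
open MeasureTheory Filter Topology Set Metric

noncomputable section

attribute [local instance] Classical.propDecidable

/-! In the stereographic chart `φ` centred at `p`, the great circle through `p` and `z` becomes
the line through `0` and `ζ = φ z`: the shorter arc is the segment `[0, ζ]` and the longer arc the
rest of the line. The chart expression `G` of `g` is `C¹` with `G 0 = 0`, so near `0` it is
`1/4`-close to its derivative in the sense of `ApproximatesLinearOn`. If moreover `G ζ = ζ`,
comparing `G (s • ζ)` with both fixed endpoints shows that it lies within
`min s (1 - s) * ‖ζ‖ / 2` of `s • ζ`, so it can meet the line outside the open segment only at
`0` or `ζ`. -/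

open scoped RealInnerProductSpace NNReal

section FixedSegment

variable {E : Type*} [NormedAddCommGroup E] [NormedSpace ℝ E] {f : E → E} {A : E →L[ℝ] E}
  {s : Set E} {c : ℝ≥0}

theorem ApproximatesLinearOn.norm_apply_lineMap_sub_le (hf : ApproximatesLinearOn f A s c)
    {x y : E} (hx : x ∈ s) (hy : y ∈ s) (hfx : f x = x) (hfy : f y = y) {r : ℝ}
    (hr : AffineMap.lineMap x y r ∈ s) :
    ‖f (AffineMap.lineMap x y r) - AffineMap.lineMap x y r‖ ≤ 2 * c * |r| * ‖y - x‖ := by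
  set u := AffineMap.lineMap x y r
  have hu : u - x = r • (y - x) := AffineMap.lineMap_vsub_left x y r
  have hux := hf u hr x hx
  have hyx := hf y hy x hx
  rw [hfx, hu] at hux
  rw [hfx, hfy] at hyx
  calc ‖f u - u‖ = ‖(f u - x - A (r • (y - x))) - r • (y - x - A (y - x))‖ := by
        rw [map_smul, smul_sub, ← hu]; abel_nf
    _ ≤ c * ‖r • (y - x)‖ + |r| * (c * ‖y - x‖) := by
        refine (norm_sub_le _ _).trans (add_le_add hux ?_)
        rw [norm_smul, Real.norm_eq_abs]
        exact mul_le_mul_of_nonneg_left hyx (abs_nonneg r)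
    _ = 2 * c * |r| * ‖y - x‖ := by rw [norm_smul, Real.norm_eq_abs]; ring

theorem ApproximatesLinearOn.smul_eq_zero_or_eq_of_apply_smul
    (hf : ApproximatesLinearOn f A s c) (hc : c < 2⁻¹) (hs : Convex ℝ s) (h0 : (0 : E) ∈ s)
    {z : E} (hz : z ∈ s) (hf0 : f 0 = 0) (hfz : f z = z) {σ τ : ℝ} (hσ : σ ∈ Icc (0 : ℝ) 1)
    (hτ : τ ≤ 0 ∨ 1 ≤ τ) (h : f (σ • z) = τ • z) : τ • z = 0 ∨ τ • z = z := by
  rcases eq_or_ne z 0 with rfl | hz0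
  · simp
  have hσz : AffineMap.lineMap 0 z σ = σ • z := by simp [AffineMap.lineMap_apply_module]
  have hσz' : AffineMap.lineMap z 0 (1 - σ) = σ • z := by
    rw [AffineMap.lineMap_apply_one_sub, hσz]
  have hmem : σ • z ∈ s := hs.smul_mem_of_zero_mem h0 hz hσ
  have near0 := hf.norm_apply_lineMap_sub_le h0 hz hf0 hfz (hσz ▸ hmem)
  have nearz := hf.norm_apply_lineMap_sub_le hz h0 hfz hf0 (hσz' ▸ hmem)
  rw [hσz, h, ← sub_smul, norm_smul, Real.norm_eq_abs, sub_zero, abs_of_nonneg hσ.1] at near0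
  rw [hσz', h, ← sub_smul, norm_smul, Real.norm_eq_abs, zero_sub, norm_neg,
    abs_of_nonneg (sub_nonneg.2 hσ.2)] at nearz
  have hzpos : 0 < ‖z‖ := norm_pos_iff.2 hz0
  have hc' : (c : ℝ) < 2⁻¹ := by exact_mod_cast hc
  have h1 : |τ - σ| ≤ 2 * c * σ := le_of_mul_le_mul_right (by linarith) hzpos
  have h2 : |τ - σ| ≤ 2 * c * (1 - σ) := le_of_mul_le_mul_right (by linarith) hzpos
  rcases hτ with hτ | hτ
  · left
    have : τ = 0 := by
      have := mul_nonneg hσ.1 (by linarith : (0 : ℝ) ≤ 1 - 2 * c)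
      linarith [(abs_le.1 h1).1]
    rw [this, zero_smul]
  · right
    have : τ = 1 := by
      have := mul_nonneg (sub_nonneg.2 hσ.2) (by linarith : (0 : ℝ) ≤ 1 - 2 * c)
      linarith [(abs_le.1 h2).2]
    rw [this, one_smul]

end FixedSegment

section Sphere

variable {E : Type*} [NormedAddCommGroup E] [InnerProductSpace ℝ E] {n : ℕ}
  [Fact (Module.finrank ℝ E = n + 1)]

theorem neg_one_lt_inner_of_ne_neg {p x : sphere (0 : E) 1} (h : x ≠ -p) :
    -1 < ⟪(p : E), x⟫ := by
  refine (neg_one_le_real_inner_of_norm_eq_one (norm_eq_of_mem_sphere p)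
    (norm_eq_of_mem_sphere x)).lt_of_ne fun h' => h (Subtype.ext ?_)
  rw [coe_neg_sphere, (inner_eq_neg_one_iff_of_norm_eq_one (norm_eq_of_mem_sphere p)
    (norm_eq_of_mem_sphere x)).1 h'.symm, neg_neg]

theorem inner_eq_of_coe_eq_add_smul {p z x : sphere (0 : E) 1} {a b : ℝ}
    (hx : (x : E) = a • (p : E) + b • (z : E)) : ⟪(p : E), x⟫ = a + b * ⟪(p : E), z⟫ := by
  rw [hx, inner_add_right, real_inner_smul_right, real_inner_smul_right,
    real_inner_self_eq_norm_sq, norm_eq_of_mem_sphere, one_pow, mul_one]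

theorem sq_one_add_sub_sq_eq_of_coe_eq_add_smul {p z x : sphere (0 : E) 1} {a b : ℝ}
    (hx : (x : E) = a • (p : E) + b • (z : E)) :
    (1 + a) ^ 2 - b ^ 2 = 2 * a * (1 + ⟪(p : E), x⟫) := by
  have hnorm : ‖a • (p : E) + b • (z : E)‖ ^ 2 = 1 := by
    rw [← hx, norm_eq_of_mem_sphere, one_pow]
  rw [norm_add_sq_real, norm_smul, norm_smul, real_inner_smul_left, real_inner_smul_right,
    norm_eq_of_mem_sphere, norm_eq_of_mem_sphere, Real.norm_eq_abs, Real.norm_eq_abs] at hnorm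
  simp only [mul_one, sq_abs] at hnorm
  rw [inner_eq_of_coe_eq_add_smul hx]
  linear_combination (-1 : ℝ) * hnorm

theorem chartAt_sphere_source (p : sphere (0 : E) 1) :
    (chartAt (EuclideanSpace ℝ (Fin n)) p).source = {-p}ᶜ :=
  stereographic'_source (-p)

theorem chartAt_sphere_self (p : sphere (0 : E) 1) :
    chartAt (EuclideanSpace ℝ (Fin n)) p p = 0 := by
  show (OrthonormalBasis.fromOrthogonalSpanSingleton n (ne_zero_of_mem_unit_sphere (-p))).repr
    (stereographic (norm_eq_of_mem_sphere (-p)) p) = 0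
  rw [stereographic_neg_apply, map_zero]

theorem chartAt_sphere_apply (p x : sphere (0 : E) 1) :
    chartAt (EuclideanSpace ℝ (Fin n)) p x = (2 / (1 + ⟪(p : E), x⟫)) •
      (OrthonormalBasis.fromOrthogonalSpanSingleton n (ne_zero_of_mem_unit_sphere (-p))).repr
        ((ℝ ∙ ((-p : sphere (0 : E) 1) : E))ᗮ.orthogonalProjectionOnto (x : E)) := by
  have hchart : chartAt (EuclideanSpace ℝ (Fin n)) p x =
      (OrthonormalBasis.fromOrthogonalSpanSingleton n (ne_zero_of_mem_unit_sphere (-p))).repr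
        (stereographic (norm_eq_of_mem_sphere (-p)) x) := rfl
  rw [hchart, stereographic_apply, LinearIsometryEquiv.map_smul]
  congr 2
  rw [coe_neg_sphere, inner_neg_left, sub_neg_eq_add]

theorem chartAt_sphere_eq_smul_of_coe_eq_add_smul {p z x : sphere (0 : E) 1} {a b : ℝ}
    (hz : z ≠ -p) (hx : (x : E) = a • (p : E) + b • (z : E)) :
    chartAt (EuclideanSpace ℝ (Fin n)) p x =
      (b * (1 + ⟪(p : E), z⟫) / (1 + ⟪(p : E), x⟫)) • chartAt (EuclideanSpace ℝ (Fin n)) p z := by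
  have hproj : (ℝ ∙ ((-p : sphere (0 : E) 1) : E))ᗮ.orthogonalProjectionOnto (p : E) = 0 := by
    have := Submodule.orthogonalProjectionOnto_orthogonalComplement_singleton_eq_zero (𝕜 := ℝ)
      ((-p : sphere (0 : E) 1) : E)
    rwa [coe_neg_sphere, map_neg, neg_eq_zero] at this
  have hz' : 1 + ⟪(p : E), z⟫ ≠ 0 := by linarith [neg_one_lt_inner_of_ne_neg hz]
  rw [chartAt_sphere_apply, chartAt_sphere_apply p z, hx, map_add, map_smul, map_smul, hproj,
    smul_zero, zero_add, map_smul, smul_smul, smul_smul]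
  congr 1
  field_simp

end Sphere

section ChartConjugate

open Manifold

variable {𝕜 : Type*} [RCLike 𝕜] {E : Type*} [NormedAddCommGroup E] [NormedSpace 𝕜 E]
  {M : Type*} [TopologicalSpace M] [ChartedSpace E M] {f : M → M} {x : M}

theorem ContMDiffAt.hasStrictFDerivAt_chartAt_conj (hf : ContMDiffAt 𝓘(𝕜, E) 𝓘(𝕜, E) 1 f x)
    (hx : f x = x) :
    HasStrictFDerivAt (chartAt E x ∘ f ∘ (chartAt E x).symm)
      (fderiv 𝕜 (chartAt E x ∘ f ∘ (chartAt E x).symm) (chartAt E x x)) (chartAt E x x) := by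
  obtain ⟨-, hdiff⟩ := contMDiffAt_iff.1 hf
  rw [hx] at hdiff
  simp only [extChartAt, OpenPartialHomeomorph.extend, modelWithCornersSelf_partialEquiv,
    PartialEquiv.trans_refl, OpenPartialHomeomorph.toFun_eq_coe,
    ModelWithCorners.range_eq_univ, contDiffWithinAt_univ] at hdiff
  exact hdiff.hasStrictFDerivAt one_ne_zero

theorem ContMDiffAt.exists_approximatesLinearOn_chartAt_conj
    (hf : ContMDiffAt 𝓘(𝕜, E) 𝓘(𝕜, E) 1 f x) (hx : f x = x) {c : ℝ≥0} (hc : 0 < c) :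
    ∃ A : E →L[𝕜] E, ∃ N ∈ 𝓝 (chartAt E x x),
      ApproximatesLinearOn (chartAt E x ∘ f ∘ (chartAt E x).symm) A N c ∧
        MapsTo (f ∘ (chartAt E x).symm) N (chartAt E x).source := by
  obtain ⟨N, hN, happrox⟩ := (hf.hasStrictFDerivAt_chartAt_conj hx).approximates_deriv_on_nhds
    (.inr hc)
  set e := chartAt E x
  have hxe : x ∈ e.source := mem_chart_source E x
  have hsymm : e.symm (e x) = x := e.left_inv hxe
  have hback : (f ∘ e.symm) ⁻¹' e.source ∈ 𝓝 (e x) := by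
    refine ContinuousAt.preimage_mem_nhds ?_ (e.open_source.mem_nhds ?_)
    · exact (hsymm ▸ hf.continuousAt).comp (e.continuousAt_symm (e.map_source hxe))
    · rwa [Function.comp_apply, hsymm, hx]
  exact ⟨_, N ∩ _, inter_mem hN hback, happrox.mono_set inter_subset_left,
    fun _ hy => hy.2⟩

end ChartConjugate

local notation "ℝ²" => EuclideanSpace ℝ (Fin 2)

section GreatCircle

-- The general sphere lemmas above are stated for `finrank ℝ E = n + 1`.
instance : Fact (Module.finrank ℝ (EuclideanSpace ℝ (Fin 3)) = 2 + 1) :=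
  ⟨finrank_euclideanSpace_fin⟩

theorem ne_neg_of_mem_minorArcS {p z x : 𝕊²} (hz : z ≠ -p) (hx : x ∈ minorArcS p z) :
    x ≠ -p := by
  obtain ⟨a, b, ha, hb, hxab⟩ := hx
  rintro rfl
  have hc := neg_one_lt_inner_of_ne_neg hz
  have hpx : a + b * ⟪(p : EuclideanSpace ℝ (Fin 3)), z⟫ = -1 := by
    rw [← inner_eq_of_coe_eq_add_smul hxab, coe_neg_sphere, inner_neg_right,
      real_inner_self_eq_norm_sq, norm_eq_of_mem_sphere, one_pow]
  have key := sq_one_add_sub_sq_eq_of_coe_eq_add_smul hxab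
  rw [inner_eq_of_coe_eq_add_smul hxab, hpx] at key
  have hba : b = 1 + a := by nlinarith
  subst hba
  nlinarith [mul_pos (by linarith : 0 < 1 + a)
    (by linarith : 0 < 1 + ⟪(p : EuclideanSpace ℝ (Fin 3)), z⟫)]

theorem exists_mem_Icc_chartAt_eq_smul_of_mem_minorArcS {p z x : 𝕊²} (hz : z ≠ -p)
    (hx : x ∈ minorArcS p z) : ∃ σ ∈ Icc (0 : ℝ) 1, chartAt ℝ² p x = σ • chartAt ℝ² p z := by
  have hD : 0 < 1 + ⟪(p : EuclideanSpace ℝ (Fin 3)), x⟫ := by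
    linarith [neg_one_lt_inner_of_ne_neg (ne_neg_of_mem_minorArcS hz hx)]
  obtain ⟨a, b, ha, hb, hxab⟩ := hx
  have hc := neg_one_lt_inner_of_ne_neg hz
  have key := sq_one_add_sub_sq_eq_of_coe_eq_add_smul hxab
  have hba : b ≤ 1 + a := by nlinarith [mul_nonneg ha hD.le]
  refine ⟨_, ⟨div_nonneg (mul_nonneg hb (by linarith)) hD.le, ?_⟩,
    chartAt_sphere_eq_smul_of_coe_eq_add_smul hz hxab⟩
  rw [div_le_one hD, inner_eq_of_coe_eq_add_smul hxab]
  nlinarith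

theorem exists_chartAt_eq_smul_of_mem_majorArcS {p z x : 𝕊²} (hz : z ≠ -p)
    (hx : x ∈ majorArcS p z) (hxp : x ≠ -p) :
    ∃ τ : ℝ, (τ ≤ 0 ∨ 1 ≤ τ) ∧ chartAt ℝ² p x = τ • chartAt ℝ² p z := by
  have hD : 0 < 1 + ⟪(p : EuclideanSpace ℝ (Fin 3)), x⟫ := by
    linarith [neg_one_lt_inner_of_ne_neg hxp]
  obtain ⟨a, b, hab, hxab⟩ := hx
  have hc := neg_one_lt_inner_of_ne_neg hz
  refine ⟨_, ?_, chartAt_sphere_eq_smul_of_coe_eq_add_smul hz hxab⟩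
  rcases le_or_gt b 0 with hb | hb
  · exact .inl (div_nonpos_of_nonpos_of_nonneg (mul_nonpos_of_nonpos_of_nonneg hb (by linarith))
      hD.le)
  · have ha : a ≤ 0 := hab.resolve_right hb.not_ge
    have key := sq_one_add_sub_sq_eq_of_coe_eq_add_smul hxab
    have hab' : 1 + a ≤ b := by nlinarith [mul_nonpos_of_nonpos_of_nonneg ha hD.le]
    refine .inr ((one_le_div hD).2 ?_)
    rw [inner_eq_of_coe_eq_add_smul hxab]
    nlinarith

theorem insert_subset_image_minorArcS_inter_majorArcS {g : 𝕊² → 𝕊²} {p z : 𝕊²} (hp : g p = p)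
    (hz : g z = z) : {z, p} ⊆ g '' minorArcS p z ∩ majorArcS p z := by
  rintro w (rfl | rfl)
  · exact ⟨⟨w, ⟨0, 1, le_rfl, zero_le_one, by simp⟩, hz⟩, ⟨0, 1, .inl le_rfl, by simp⟩⟩
  · exact ⟨⟨w, ⟨1, 0, zero_le_one, le_rfl, by simp⟩, hp⟩, ⟨1, 0, .inr le_rfl, by simp⟩⟩

theorem image_minorArcS_inter_majorArcS_subset {g : 𝕊² → 𝕊²} {p z : 𝕊²} {A : ℝ² →L[ℝ] ℝ²}
    {δ : ℝ} {c : ℝ≥0} (hc : c < 2⁻¹)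
    (happrox : ApproximatesLinearOn (chartAt ℝ² p ∘ g ∘ (chartAt ℝ² p).symm) A (ball 0 δ) c)
    (hmaps : MapsTo (g ∘ (chartAt ℝ² p).symm) (ball 0 δ) (chartAt ℝ² p).source)
    (hp : g p = p) (hz : z ≠ -p) (hzδ : chartAt ℝ² p z ∈ ball 0 δ) (hgz : g z = z) :
    g '' minorArcS p z ∩ majorArcS p z ⊆ {z, p} := by
  set φ := chartAt ℝ² p
  have hzsrc : z ∈ φ.source := by rw [chartAt_sphere_source]; exact hz
  have hp0 : φ p = 0 := chartAt_sphere_self p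
  have h0 : (0 : ℝ²) ∈ ball 0 δ := mem_ball_self (pos_of_mem_ball hzδ)
  have hfix : ∀ y ∈ φ.source, g y = y → (φ ∘ g ∘ φ.symm) (φ y) = φ y := fun y hy hgy => by
    simp only [Function.comp_apply, φ.left_inv hy, hgy]
  rintro _ ⟨⟨x, hx, rfl⟩, hgx⟩
  obtain ⟨σ, hσ, hxσ⟩ : ∃ σ ∈ Icc (0 : ℝ) 1, φ x = σ • φ z :=
    exists_mem_Icc_chartAt_eq_smul_of_mem_minorArcS hz hx
  have hxsrc : x ∈ φ.source := by
    rw [chartAt_sphere_source]; exact ne_neg_of_mem_minorArcS hz hx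
  have hxσ' : φ.symm (σ • φ z) = x := by rw [← hxσ, φ.left_inv hxsrc]
  have hgxsrc : g x ∈ φ.source := hxσ' ▸ hmaps ((convex_ball 0 δ).smul_mem_of_zero_mem h0 hzδ hσ)
  obtain ⟨τ, hτ, hgxτ⟩ : ∃ τ : ℝ, (τ ≤ 0 ∨ 1 ≤ τ) ∧ φ (g x) = τ • φ z :=
    exists_chartAt_eq_smul_of_mem_majorArcS hz hgx (by rwa [chartAt_sphere_source] at hgxsrc)
  have hGσ : (φ ∘ g ∘ φ.symm) (σ • φ z) = τ • φ z := by
    simp only [Function.comp_apply, hxσ', hgxτ]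
  rcases happrox.smul_eq_zero_or_eq_of_apply_smul hc (convex_ball 0 δ) h0 hzδ
      (hp0 ▸ hfix p (mem_chart_source _ p) hp) (hfix z hzsrc hgz) hσ hτ hGσ
    with h | h
  · exact .inr (φ.injOn hgxsrc (mem_chart_source _ p) (by rw [hgxτ, h, hp0]))
  · exact .inl (φ.injOn hgxsrc hzsrc (by rw [hgxτ, h]))

end GreatCircle

theorem stmt17_arcs_near_a_fixed_point
    (g : 𝕊² → 𝕊²) (hg : IsC1SphereDiffeo g) (p : 𝕊²) (hp : g p = p) :
    ∃ V : Set 𝕊², IsOpen V ∧ p ∈ V ∧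
      (∀ z ∈ V, (z : EuclideanSpace ℝ (Fin 3)) ≠ -(p : EuclideanSpace ℝ (Fin 3))) ∧
      ∀ z ∈ V, z ≠ p → g z = z →
        g '' minorArcS p z ∩ majorArcS p z = {z, p} := by
  set φ := chartAt ℝ² p
  obtain ⟨A, N, hN, happrox, hmaps⟩ :=
    hg.2.1.contMDiffAt.exists_approximatesLinearOn_chartAt_conj hp (c := 4⁻¹) (by norm_num)
  rw [chartAt_sphere_self] at hN
  obtain ⟨δ, hδ, hδN⟩ := Metric.mem_nhds_iff.1 hN
  have hV : ∀ z ∈ φ.source ∩ φ ⁻¹' ball 0 δ, z ≠ -p := fun z hz => by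
    simpa [φ, chartAt_sphere_source] using hz.1
  refine ⟨φ.source ∩ φ ⁻¹' ball 0 δ, φ.isOpen_inter_preimage isOpen_ball,
    ⟨mem_chart_source _ p, by simp [φ, chartAt_sphere_self, hδ]⟩,
    fun z hz h => hV z hz (Subtype.ext h), fun z hz _ hgz => ?_⟩
  exact (image_minorArcS_inter_majorArcS_subset (by norm_num) (happrox.mono_set hδN)
    (hmaps.mono_left hδN) hp (hV z hz) hz.2 hgz).antisymm
    (insert_subset_image_minorArcS_inter_majorArcS hp hgz)

end
end
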